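/- arXiv:1703.02901 — 3 statements merged into one kernel-verified Lean document; each statement's English description precedes it below -/
import Mathlib

section
/- Let X be a set, d a pseudometric on X, γ : [0,1] → X a map continuous with respect to d, and r : [0,1] → ℝ a function with r(t) > 0 for every t ∈ [0,1]. Then for every partition Σ of [0,1] there exists a refinement Σ' = {0 = t'_0 ≤ t'_1 ≤ ... ≤ t'_m = 1} of Σ (i.e. every point of Σ appears among the t'_j) such that d(γ(t'_j), γ(t'_{j+1})) < max{r(t'_j), r(t'_{j+1})} for every j ∈ {0, ..., m−1}. -/
open unitInterval ENNReal Topology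

/-- A pseudometric on a set `X`. -/
structure PseudoMetricOn (X : Type*) where
  d : X → X → ℝ
  refl : ∀ x, d x x = 0
  symm : ∀ x y, d x y = d y x
  nonneg : ∀ x y, 0 ≤ d x y
  triangle : ∀ x y z, d x z ≤ d x y + d y z

/-- A partition `0 = t₀ ≤ t₁ ≤ ... ≤ tₙ = 1` of `[0,1]`. -/
structure UnitIntervalPartition where
  n : ℕ
  t : Fin (n + 1) → I
  mono : Monotone t
  first : t 0 = 0
  last : t (Fin.last n) = 1

/-- The sum `∑ d(γ(tᵢ), γ(tᵢ₊₁))` associated to a partition. -/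
noncomputable def pathSum {X : Type*} (d : PseudoMetricOn X) (γ : I → X)
    (P : UnitIntervalPartition) : ℝ :=
  ∑ i : Fin P.n, d.d (γ (P.t i.castSucc)) (γ (P.t i.succ))

/-- The length of `γ` induced by the pseudometric `d`. -/
noncomputable def pathLength {X : Type*} (d : PseudoMetricOn X) (γ : I → X) : ℝ≥0∞ :=
  ⨆ P : UnitIntervalPartition, ENNReal.ofReal (pathSum d γ P)

/-- The topology on `X` induced by a pseudometric. -/
noncomputable def pmTopology {X : Type*} (d : PseudoMetricOn X) : TopologicalSpace X :=
  (UniformSpace.ofDist d.d d.refl d.symm d.triangle).toTopologicalSpace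

/-- `γ : [0,1] → X` is continuous w.r.t. the pseudometric `ρ`. -/
def IsAdmissible {X : Type*} (ρ : PseudoMetricOn X) (γ : I → X) : Prop :=
  Continuous[inferInstance, pmTopology ρ] γ

/-- The intrinsic pseudometric induced by `d`, with admissible paths the `ρ`-continuous ones. -/
noncomputable def intrinsicDist {X : Type*} (d ρ : PseudoMetricOn X) (x y : X) : ℝ≥0∞ :=
  ⨅ (γ : I → X) (_ : IsAdmissible ρ γ ∧ γ 0 = x ∧ γ 1 = y), pathLength d γ

/-!
Call a step `x ≤ y` short if `d(γ x, γ y) < max (r x) (r y)`. By continuity of `γ`, every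
`c` makes short steps with all points close to it on either side; a supremum argument
("real induction") then shows that `0` is joined to `1` by a finite chain of short steps.
Requiring in addition that no step jumps over a point of `Σ` costs nothing locally, and forces
the chain through every point of `Σ`.
-/

open Set Filter Relation

lemma IsAdmissible.eventually_lt {X : Type*} {d : PseudoMetricOn X} {γ : I → X}
    (hγ : IsAdmissible d γ) (t : I) {ε : ℝ} (hε : 0 < ε) :
    ∀ᶠ s in 𝓝 t, d.d (γ t) (γ s) < ε := by
  -- its uniformity is `UniformSpace.ofDist d.d …`, so its topology is `pmTopology d`
  let _ : PseudoMetricSpace X :=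
    { dist := d.d, dist_self := d.refl, dist_comm := d.symm, dist_triangle := d.triangle }
  have hγ' : Continuous γ := hγ
  filter_upwards [hγ'.continuousAt.preimage_mem_nhds (Metric.ball_mem_nhds (γ t) hε)] with s hs
  rw [d.symm]
  exact hs

lemma eventually_notMem_Ioo_left {α : Type*} [LinearOrder α] [TopologicalSpace α]
    [OrderClosedTopology α] (p c : α) : ∀ᶠ x in 𝓝 c, p ∉ Ioo x c := by
  rcases lt_or_ge p c with hpc | hcp
  · filter_upwards [eventually_gt_nhds hpc] with x hpx hp using hp.1.not_gt hpx
  · exact .of_forall fun x hp => hp.2.not_ge hcp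

lemma eventually_notMem_Ioo_right {α : Type*} [LinearOrder α] [TopologicalSpace α]
    [OrderClosedTopology α] (p c : α) : ∀ᶠ x in 𝓝 c, p ∉ Ioo c x := by
  rcases lt_or_ge c p with hcp | hpc
  · filter_upwards [eventually_lt_nhds hcp] with x hxp hp using hp.2.not_gt hxp
  · exact .of_forall fun x hp => hp.1.not_ge hpc

theorem Relation.reflTransGen_of_eventually_nhdsLT_nhdsGT {α : Type*}
    [ConditionallyCompleteLinearOrder α] [TopologicalSpace α] [OrderTopology α] [DenselyOrdered α]
    {S : α → α → Prop} (hleft : ∀ c, ∀ᶠ x in 𝓝[<] c, S x c)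
    (hright : ∀ c, ∀ᶠ x in 𝓝[>] c, S c x) {a b : α} (hab : a ≤ b) : ReflTransGen S a b := by
  set T := {x | x ≤ b ∧ ReflTransGen S a x}
  have haT : a ∈ T := ⟨hab, .refl⟩
  have hT : BddAbove T := ⟨b, fun x hx => hx.1⟩
  have hac : a ≤ sSup T := le_csSup hT haT
  have hcb : sSup T ≤ b := csSup_le ⟨a, haT⟩ fun x hx => hx.1
  have hreach : ReflTransGen S a (sSup T) := by
    rcases hac.eq_or_lt with hac | hac
    · exact hac ▸ .refl
    obtain ⟨l, hlc, hl⟩ := (mem_nhdsLT_iff_exists_Ioo_subset' hac).1 (hleft (sSup T))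
    obtain ⟨u, huT, hlu⟩ := exists_lt_of_lt_csSup ⟨a, haT⟩ hlc
    rcases (le_csSup hT huT).eq_or_lt with huc | huc
    · exact huc ▸ huT.2
    · exact huT.2.tail (hl ⟨hlu, huc⟩)
  refine hcb.eq_or_lt.elim (· ▸ hreach) fun hcb => ?_
  have := nhdsGT_neBot_of_exists_gt ⟨b, hcb⟩
  obtain ⟨x, hSx, hcx, hxb⟩ := ((hright (sSup T)).and (Ioo_mem_nhdsGT hcb)).exists
  exact ((le_csSup hT ⟨hxb.le, hreach.tail hSx⟩).not_gt hcx).elim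

theorem List.IsChain.mem_of_notMem_Ioo {α : Type*} [LinearOrder α] {R : α → α → Prop} {p : α}
    (hR : ∀ x y, R x y → x ≤ y ∧ p ∉ Ioo x y) :
    ∀ {a : α} {l : List α}, IsChain R (a :: l) → a ≤ p →
      p ≤ (a :: l).getLast (cons_ne_nil _ _) → p ∈ a :: l
  | a, [], _, hap, hpb => by simp [le_antisymm hpb hap]
  | a, b :: l, hl, hap, hpb => by
    obtain ⟨-, hp⟩ := hR a b (isChain_cons_cons.1 hl).1
    rcases lt_or_ge b p with hbp | hpb'
    · exact mem_cons_of_mem a ((isChain_cons_cons.1 hl).2.mem_of_notMem_Ioo hR hbp.le hpb)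
    · rcases hap.eq_or_lt with rfl | hap
      · exact mem_cons_self
      · rcases hpb'.eq_or_lt with rfl | hpb'
        · simp
        · exact (hp ⟨hap, hpb'⟩).elim

theorem UnitIntervalPartition.exists_of_isChain {R : I → I → Prop} (hR : ∀ x y, R x y → x ≤ y)
    {L : List I} (hL : (0 :: L).IsChain R)
    (hlast : (0 :: L).getLast (List.cons_ne_nil _ _) = 1) :
    ∃ P : UnitIntervalPartition, (∀ x ∈ (0 : I) :: L, ∃ j, P.t j = x) ∧
      ∀ j : Fin P.n, R (P.t j.castSucc) (P.t j.succ) := by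
  refine ⟨⟨L.length, (0 :: L).get, fun i j hij => ?_, rfl, ?_⟩, fun x hx => List.mem_iff_get.1 hx,
    fun j => List.isChain_iff_getElem.1 hL j (by simp)⟩
  · exact (List.isChain_iff_pairwise.1 (hL.imp hR)).rel_get_of_le hij
  · rw [← hlast, List.getLast_eq_getElem]
    rfl

/-- for a `d`-continuous path `γ` and a positive function `r`, every partition
admits a refinement whose consecutive values of `γ` are `d`-closer than the max of the
values of `r` at the corresponding endpoints. -/
theorem exists_refinement_of_continuous {X : Type*} (d : PseudoMetricOn X) (γ : I → X)
    (hγ : IsAdmissible d γ) (r : I → ℝ) (hr : ∀ t : I, 0 < r t) (P : UnitIntervalPartition) :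
    ∃ P' : UnitIntervalPartition, (∀ i : Fin (P.n + 1), ∃ j : Fin (P'.n + 1), P'.t j = P.t i) ∧
      ∀ j : Fin P'.n, d.d (γ (P'.t j.castSucc)) (γ (P'.t j.succ))
        < max (r (P'.t j.castSucc)) (r (P'.t j.succ)) := by
  let S x y := x ≤ y ∧ d.d (γ x) (γ y) < max (r x) (r y) ∧ ∀ i, P.t i ∉ Ioo x y
  have hS : ReflTransGen S 0 1 := by
    refine reflTransGen_of_eventually_nhdsLT_nhdsGT (fun c => ?_) (fun c => ?_) zero_le_one
    · filter_upwards [self_mem_nhdsWithin, nhdsWithin_le_nhds (hγ.eventually_lt c (hr c)),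
        nhdsWithin_le_nhds (eventually_all.2 fun i => eventually_notMem_Ioo_left (P.t i) c)]
        with x hxc hd hP
      exact ⟨hxc.le, lt_max_of_lt_right (d.symm _ _ ▸ hd), hP⟩
    · filter_upwards [self_mem_nhdsWithin, nhdsWithin_le_nhds (hγ.eventually_lt c (hr c)),
        nhdsWithin_le_nhds (eventually_all.2 fun i => eventually_notMem_Ioo_right (P.t i) c)]
        with x hcx hd hP
      exact ⟨hcx.le, lt_max_of_lt_left hd, hP⟩
  obtain ⟨L, hL, hlast⟩ := List.exists_isChain_cons_of_relationReflTransGen hS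
  obtain ⟨P', hmem, hstep⟩ := UnitIntervalPartition.exists_of_isChain (fun _ _ h => h.1) hL hlast
  refine ⟨P', fun i => hmem _ ?_, fun j => (hstep j).2.1⟩
  exact hL.mem_of_notMem_Ioo (fun x y h => ⟨h.1, h.2.2 i⟩) nonneg' (hlast ▸ le_one')
end

section
/- Let X be a set, let d1 and d2 be pseudometrics on X, let C ≥ 0 be a real constant, and let γ : [0,1] → X be a map continuous with respect to d1. Assume that for every t ∈ [0,1] there exists ε_t > 0 such that for all s ∈ [0,1], if d1(γ(t), γ(s)) < ε_t then d1(γ(t), γ(s)) ≤ C·d2(γ(t), γ(s)). Then the induced lengths satisfy L_{d1}(γ) ≤ C·L_{d2}(γ) in [0,∞]. -/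
open unitInterval ENNReal Topology
open scoped Uniformity

section Helpers

variable {α : Type*}

noncomputable def chainSum (f : α → α → ℝ) {n : ℕ} (u : Fin (n + 1) → α) : ℝ :=
  ∑ i : Fin n, f (u i.castSucc) (u i.succ)

def glue {n m : ℕ} (u : Fin (n + 1) → α) (v : Fin (m + 1) → α) : Fin (n + m + 1) → α :=
  fun k => if h : k.val ≤ n then u ⟨k.val, by omega⟩ else v ⟨k.val - n, by omega⟩

theorem glue_left {n m : ℕ} (u : Fin (n + 1) → α) (v : Fin (m + 1) → α) (k : Fin (n + m + 1))
    (hk : k.val ≤ n) : glue u v k = u ⟨k.val, by omega⟩ := dif_pos hk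

theorem glue_right {n m : ℕ} {u : Fin (n + 1) → α} {v : Fin (m + 1) → α}
    (hc : u (Fin.last n) = v 0) (k : Fin (n + m + 1)) (hk : n ≤ k.val) :
    glue u v k = v ⟨k.val - n, by omega⟩ := by
  rcases eq_or_lt_of_le hk with he | hl
  · rw [glue, dif_pos (le_of_eq he.symm)]
    have h1 : (⟨k.val, by omega⟩ : Fin (n + 1)) = Fin.last n := by
      apply Fin.ext; simp [← he]
    have h2 : (⟨k.val - n, by omega⟩ : Fin (m + 1)) = 0 := by
      apply Fin.ext; simp [← he]
    rw [h1, hc, h2]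
  · rw [glue, dif_neg (by omega)]

theorem glue_mono [Preorder α] {n m : ℕ} {u : Fin (n + 1) → α} {v : Fin (m + 1) → α}
    (hu : Monotone u) (hv : Monotone v) (hc : u (Fin.last n) = v 0) :
    Monotone (glue u v) := by
  intro j k hjk
  rw [Fin.le_def] at hjk
  rcases le_or_gt j.val n with hj | hj
  · rcases le_or_gt k.val n with hk | hk
    · rw [glue_left _ _ _ hj, glue_left _ _ _ hk]
      exact hu (by simp [Fin.le_def, hjk])
    · rw [glue_left _ _ _ hj, glue_right hc _ hk.le]
      calc u ⟨j.val, by omega⟩ ≤ u (Fin.last n) := hu (by simp [Fin.le_def]; omega)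
        _ = v 0 := hc
        _ ≤ v _ := hv (by simp [Fin.le_def])
  · rw [glue_right hc _ hj.le, glue_right hc _ (by omega)]
    exact hv (by simp [Fin.le_def]; omega)

theorem chainSum_glue (f : α → α → ℝ) {n m : ℕ} {u : Fin (n + 1) → α} {v : Fin (m + 1) → α}
    (hc : u (Fin.last n) = v 0) :
    chainSum f (glue u v) = chainSum f u + chainSum f v := by
  unfold chainSum
  rw [Fin.sum_univ_add (f := fun i : Fin (n + m) => f (glue u v i.castSucc) (glue u v i.succ))]
  congr 1
  · refine Finset.sum_congr rfl fun i _ => ?_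
    rw [glue_left u v _ (by simp), glue_left u v _ (by simp)]
    congr 1 <;> congr 1 <;> apply Fin.ext <;> simp
  · refine Finset.sum_congr rfl fun i _ => ?_
    rw [glue_right hc _ (by simp), glue_right hc _ (by simp; omega)]
    congr 1 <;> congr 1 <;> apply Fin.ext <;> simp <;> omega

def pairFn (x y : α) : Fin 2 → α := fun i => if i.val = 0 then x else y

theorem pairFn_mono [Preorder α] {x y : α} (hxy : x ≤ y) : Monotone (pairFn x y) := by
  intro p q hpq
  rw [Fin.le_def] at hpq
  unfold pairFn
  by_cases hp : p.val = 0 <;> by_cases hq : q.val = 0 <;> simp [hp, hq, hxy] <;> omega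

theorem pairFn_zero (x y : α) : pairFn x y 0 = x := rfl

theorem pairFn_last (x y : α) : pairFn x y (Fin.last 1) = y := rfl

theorem chainSum_pairFn (f : α → α → ℝ) (x y : α) : chainSum f (pairFn x y) = f x y := by
  simp [chainSum, pairFn, Fin.sum_univ_one]

end Helpers

theorem dist_le_chainSum {X : Type*} (d : PseudoMetricOn X) (γ : I → X) :
    ∀ {n : ℕ} (u : Fin (n + 1) → I),
      d.d (γ (u 0)) (γ (u (Fin.last n))) ≤ chainSum (fun x y => d.d (γ x) (γ y)) u := by
  intro n
  induction n with
  | zero => intro u; simp [chainSum, Fin.last, show (Fin.last 0) = 0 from rfl, d.refl]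
  | succ n ih =>
    intro u
    calc d.d (γ (u 0)) (γ (u (Fin.last (n + 1))))
        ≤ d.d (γ (u 0)) (γ (u (Fin.last n).castSucc))
          + d.d (γ (u (Fin.last n).castSucc)) (γ (u (Fin.last (n + 1)))) := d.triangle _ _ _
      _ ≤ chainSum (fun x y => d.d (γ x) (γ y)) (u ∘ Fin.castSucc)
          + d.d (γ (u (Fin.last n).castSucc)) (γ (u (Fin.last (n + 1)))) := by
          have := ih (u ∘ Fin.castSucc)
          simpa using this
      _ = chainSum (fun x y => d.d (γ x) (γ y)) u := by
          unfold chainSum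
          rw [Fin.sum_univ_castSucc
            (f := fun i : Fin (n+1) => d.d (γ (u i.castSucc)) (γ (u i.succ)))]
          rw [Fin.succ_last]
          have : ∀ i : Fin n, i.castSucc.succ = i.succ.castSucc := fun i => by
            apply Fin.ext; simp
          simp [Function.comp]

theorem exists_delta {X : Type*} (d1 : PseudoMetricOn X) (γ : I → X)
    (hγ : IsAdmissible d1 γ) (t : I) {ε : ℝ} (hε : 0 < ε) :
    ∃ δ > (0 : ℝ), ∀ s : I, |(s : ℝ) - (t : ℝ)| < δ → d1.d (γ t) (γ s) < ε := by
  letI U : UniformSpace X := UniformSpace.ofDist d1.d d1.refl d1.symm d1.triangle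
  have hb : (𝓤 X).HasBasis (fun ε : ℝ => 0 < ε) (fun ε => { p : X × X | d1.d p.1 p.2 < ε }) :=
    UniformSpace.hasBasis_ofFun (exists_gt 0) d1.d d1.refl d1.symm d1.triangle
      UniformSpace.ofDist_aux
  have hnb : (𝓝 (γ t)).HasBasis (fun ε : ℝ => 0 < ε) (fun ε => { y : X | d1.d (γ t) y < ε }) := by
    rw [nhds_eq_comap_uniformity]
    exact hb.comap _
  have hmem : { y : X | d1.d (γ t) y < ε } ∈ 𝓝 (γ t) := hnb.mem_of_mem hε
  have hcont : Filter.Tendsto γ (𝓝 t) (𝓝 (γ t)) :=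
    (hγ : Continuous[inferInstance, pmTopology d1] γ).tendsto t
  have hpre : γ ⁻¹' { y : X | d1.d (γ t) y < ε } ∈ 𝓝 t := hcont hmem
  rw [Metric.mem_nhds_iff] at hpre
  obtain ⟨δ, hδ, hball⟩ := hpre
  refine ⟨δ, hδ, fun s hs => ?_⟩
  have : s ∈ Metric.ball t δ := by
    rw [Metric.mem_ball, Subtype.dist_eq, Real.dist_eq]
    exact hs
  exact hball this

theorem chainSum_castSucc {α : Type*} (f : α → α → ℝ) {n : ℕ} (u : Fin (n + 2) → α) :
    chainSum f u
      = chainSum f (u ∘ Fin.castSucc) + f (u (Fin.last n).castSucc) (u (Fin.last (n + 1))) := by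
  unfold chainSum
  rw [Fin.sum_univ_castSucc (f := fun i : Fin (n + 1) => f (u i.castSucc) (u i.succ)),
    Fin.succ_last]
  have : ∀ i : Fin n, i.castSucc.succ = i.succ.castSucc := fun i => by apply Fin.ext; simp
  simp [Function.comp]

theorem exists_good_chain {X : Type*} (d1 d2 : PseudoMetricOn X) (C : ℝ) (γ : I → X)
    (hγ : IsAdmissible d1 γ)
    (h : ∀ t : I, ∃ ε > (0 : ℝ), ∀ s : I,
      d1.d (γ t) (γ s) < ε → d1.d (γ t) (γ s) ≤ C * d2.d (γ t) (γ s))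
    (a b : I) (hab : a ≤ b) :
    ∃ (m : ℕ) (u : Fin (m + 1) → I), Monotone u ∧ u 0 = a ∧ u (Fin.last m) = b ∧
      chainSum (fun x y => d1.d (γ x) (γ y)) u
        ≤ C * chainSum (fun x y => d2.d (γ x) (γ y)) u := by
  set f1 := fun x y : I => d1.d (γ x) (γ y) with hf1
  set f2 := fun x y : I => d2.d (γ x) (γ y) with hf2
  set S : Set I := {x : I | a ≤ x ∧ x ≤ b ∧ ∃ (m : ℕ) (u : Fin (m + 1) → I),
    Monotone u ∧ u 0 = a ∧ u (Fin.last m) = x ∧ chainSum f1 u ≤ C * chainSum f2 u} with hS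
  have extend : ∀ x ∈ S, ∀ y : I, x ≤ y → y ≤ b → f1 x y ≤ C * f2 x y → y ∈ S := by
    rintro x ⟨hax, hxb, m, u, hu, hu0, hul, hsum⟩ y hxy hyb hQ
    have hcomp : u (Fin.last m) = pairFn x y 0 := by rw [hul]; rfl
    refine ⟨le_trans hax hxy, hyb, m + 1, glue u (pairFn x y),
      glue_mono hu (pairFn_mono hxy) hcomp, ?_, ?_, ?_⟩
    · rw [glue_left _ _ _ (by simp), ← hu0]
      congr 1
    · rw [glue_right hcomp _ (by simp [Fin.last])]
      have : (⟨(Fin.last (m + 1)).val - m, by simp [Fin.last]⟩ : Fin 2) = Fin.last 1 := by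
        apply Fin.ext; simp [Fin.last]
      rw [this, pairFn_last]
    · rw [chainSum_glue _ hcomp, chainSum_glue _ hcomp, chainSum_pairFn, chainSum_pairFn]
      linarith
  have haS : a ∈ S :=
    ⟨le_refl a, hab, 0, fun _ => a, monotone_const, rfl, rfl, by simp [chainSum]⟩
  set Sr : Set ℝ := (fun x : I => (x : ℝ)) '' S with hSr
  have hmemSr : (a : ℝ) ∈ Sr := ⟨a, haS, rfl⟩
  have hbdd : BddAbove Sr := ⟨(b : ℝ), by rintro _ ⟨x, hx, rfl⟩; exact_mod_cast hx.2.1⟩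
  set c := sSup Sr with hc
  have hac : (a : ℝ) ≤ c := le_csSup hbdd hmemSr
  have hcb : c ≤ (b : ℝ) :=
    csSup_le ⟨_, hmemSr⟩ (by rintro _ ⟨x, hx, rfl⟩; exact_mod_cast hx.2.1)
  set cI : I := ⟨c, le_trans a.2.1 hac, le_trans hcb b.2.2⟩ with hcI
  have hcIb : cI ≤ b := by rw [← Subtype.coe_le_coe]; exact hcb
  obtain ⟨ε, hε, hεp⟩ := h cI
  obtain ⟨δ, hδ, hδp⟩ := exists_delta d1 γ hγ cI hε
  have hcS : cI ∈ S := by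
    obtain ⟨xr, hxrS, hxrgt⟩ := exists_lt_of_lt_csSup ⟨_, hmemSr⟩ (by linarith : c - δ < c)
    obtain ⟨x, hxS, rfl⟩ := hxrS
    have hxle : (x : ℝ) ≤ c := le_csSup hbdd ⟨x, hxS, rfl⟩
    have hd : |(x : ℝ) - (cI : ℝ)| < δ := by
      have : (cI : ℝ) = c := rfl
      rw [this, abs_sub_lt_iff]
      constructor <;> linarith
    have h1 : d1.d (γ cI) (γ x) < ε := hδp x hd
    have hQ : f1 x cI ≤ C * f2 x cI := by
      rw [hf1, hf2]
      simp only []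
      rw [d1.symm, d2.symm]
      exact hεp x h1
    exact extend x hxS cI (by rw [← Subtype.coe_le_coe]; exact hxle) hcIb hQ
  have hceq : c = (b : ℝ) := by
    by_contra hne
    have hlt : c < (b : ℝ) := lt_of_le_of_ne hcb hne
    set yr : ℝ := min (b : ℝ) (c + δ / 2) with hyr
    have hc0 : (0 : ℝ) ≤ c := cI.2.1
    have hy0 : 0 ≤ yr := le_min b.2.1 (by linarith)
    have hy1 : yr ≤ 1 := le_trans (min_le_left _ _) b.2.2
    set y : I := ⟨yr, hy0, hy1⟩ with hy
    have hcy : c < yr := lt_min hlt (by linarith)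
    have hyr2 : yr ≤ c + δ / 2 := min_le_right _ _
    have hdy : |(y : ℝ) - (cI : ℝ)| < δ := by
      have h1 : (cI : ℝ) = c := rfl
      have h2 : (y : ℝ) = yr := rfl
      rw [h1, h2, abs_sub_lt_iff]
      constructor <;> linarith
    have h1 : d1.d (γ cI) (γ y) < ε := hδp y hdy
    have hQ : f1 cI y ≤ C * f2 cI y := hεp y h1
    have hyS : y ∈ S := extend cI hcS y (by rw [← Subtype.coe_le_coe]; exact hcy.le)
      (by rw [← Subtype.coe_le_coe]; exact min_le_left _ _) hQ
    have : yr ≤ c := le_csSup hbdd ⟨y, hyS, rfl⟩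
    linarith
  have hcIeq : cI = b := Subtype.ext hceq
  rw [hcIeq] at hcS
  exact hcS.2.2

set_option maxRecDepth 8000 in
theorem key_lemma {X : Type*} (d1 d2 : PseudoMetricOn X) (C : ℝ) (γ : I → X)
    (hγ : IsAdmissible d1 γ)
    (h : ∀ t : I, ∃ ε > (0 : ℝ), ∀ s : I,
      d1.d (γ t) (γ s) < ε → d1.d (γ t) (γ s) ≤ C * d2.d (γ t) (γ s)) :
    ∀ (n : ℕ) (t : Fin (n + 1) → I), Monotone t →
      ∃ (m : ℕ) (u : Fin (m + 1) → I), Monotone u ∧ u 0 = t 0 ∧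
        u (Fin.last m) = t (Fin.last n) ∧
        chainSum (fun x y => d1.d (γ x) (γ y)) t
          ≤ C * chainSum (fun x y => d2.d (γ x) (γ y)) u := by
  intro n
  induction n with
  | zero =>
    intro t ht
    refine ⟨0, t, ht, rfl, rfl, ?_⟩
    have h1 : chainSum (fun x y => d1.d (γ x) (γ y)) t = 0 := by
      simp [chainSum]
    have h2 : chainSum (fun x y => d2.d (γ x) (γ y)) t = 0 := by
      simp [chainSum]
    rw [h1, h2, mul_zero]
  | succ n ih =>
    intro t ht
    have hmcs : Monotone (Fin.castSucc : Fin (n + 1) → Fin (n + 2)) :=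
      Fin.strictMono_castSucc.monotone
    obtain ⟨m, u, hu, hu0, hul, hsum⟩ := ih (t ∘ Fin.castSucc) (ht.comp hmcs)
    obtain ⟨m', v, hv, hv0, hvl, hvsum⟩ := exists_good_chain d1 d2 C γ hγ h
      (t (Fin.last n).castSucc) (t (Fin.last (n + 1))) (ht (by simp [Fin.le_def]))
    have hcomp : u (Fin.last m) = v 0 := by rw [hul, hv0]; rfl
    refine ⟨m + m', glue u v, glue_mono hu hv hcomp, ?_, ?_, ?_⟩
    · rw [glue_left _ _ _ (by simp)]
      have : (⟨(0 : Fin (m + m' + 1)).val, by simp⟩ : Fin (m + 1)) = 0 := by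
        apply Fin.ext; simp
      rw [this, hu0]; rfl
    · rw [glue_right hcomp _ (by simp [Fin.last])]
      have : (⟨(Fin.last (m + m')).val - m, by simp [Fin.last]⟩ : Fin (m' + 1))
          = Fin.last m' := by apply Fin.ext; simp [Fin.last]
      rw [this, hvl]
    · have hstep : d1.d (γ (t (Fin.last n).castSucc)) (γ (t (Fin.last (n + 1))))
          ≤ chainSum (fun x y => d1.d (γ x) (γ y)) v := by
        have := dist_le_chainSum d1 γ v
        rwa [hv0, hvl] at this
      rw [chainSum_castSucc (fun x y => d1.d (γ x) (γ y)) t, chainSum_glue _ hcomp]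
      have h2 : chainSum (fun x y => d1.d (γ x) (γ y)) v
          ≤ C * chainSum (fun x y => d2.d (γ x) (γ y)) v := hvsum
      linarith

/-- if along a `d1`-continuous path `γ` the pseudometric `d1` is locally
bounded by `C·d2` (anchored at each point of the path), then `L_{d1}(γ) ≤ C·L_{d2}(γ)`. -/
theorem pathLength_le_of_locally_le {X : Type*} (d1 d2 : PseudoMetricOn X) (C : ℝ)
    (hC : 0 ≤ C) (γ : I → X) (hγ : IsAdmissible d1 γ)
    (h : ∀ t : I, ∃ ε > (0 : ℝ), ∀ s : I,
      d1.d (γ t) (γ s) < ε → d1.d (γ t) (γ s) ≤ C * d2.d (γ t) (γ s)) :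
    pathLength d1 γ ≤ ENNReal.ofReal C * pathLength d2 γ := by
  simp only [pathLength]
  refine iSup_le fun P => ?_
  obtain ⟨m, u, hu, hu0, hul, hsum⟩ := key_lemma d1 d2 C γ hγ h P.n P.t P.mono
  let P' : UnitIntervalPartition := ⟨m, u, hu, by rw [hu0, P.first], by rw [hul, P.last]⟩
  have h1 : pathSum d1 γ P = chainSum (fun x y => d1.d (γ x) (γ y)) P.t := rfl
  have h2 : pathSum d2 γ P' = chainSum (fun x y => d2.d (γ x) (γ y)) u := rfl
  calc ENNReal.ofReal (pathSum d1 γ P) ≤ ENNReal.ofReal (C * pathSum d2 γ P') := by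
        apply ENNReal.ofReal_le_ofReal
        rw [h1, h2]
        exact hsum
    _ = ENNReal.ofReal C * ENNReal.ofReal (pathSum d2 γ P') := ENNReal.ofReal_mul hC
    _ ≤ ENNReal.ofReal C * pathLength d2 γ :=
        mul_le_mul_right (le_iSup (fun Q => ENNReal.ofReal (pathSum d2 γ Q)) P') _
end

section
/- Let X be a set and let d1 and d2 be pseudometrics on X. Let c > 0 and C > 0 be real constants and assume: (i) d2(x,y) ≤ c·d1(x,y) for all x,y ∈ X (global stability); and (ii) for every x ∈ X there exists ε_x > 0 such that for all y ∈ X, if d1(x,y) < ε_x then d1(x,y) ≤ C·d2(x,y) (local discriminativity anchored at each point). Let d̂1 and d̂2 denote the intrinsic pseudometrics induced by d1 and d2 respectively, where in both cases the admissible paths are the maps [0,1] → X that are continuous with respect to d1. Then the intrinsic pseudometrics are globally equivalent: (1/C)·d̂1(x,y) ≤ d̂2(x,y) ≤ c·d̂1(x,y) in [0,∞] for all x,y ∈ X. -/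
open unitInterval ENNReal Topology

namespace IntrinsicAux

variable {X : Type*}

noncomputable def chainSum (d : PseudoMetricOn X) (γ : I → X) : List I → ℝ
  | [] => 0
  | [_] => 0
  | a :: b :: rest => d.d (γ a) (γ b) + chainSum d γ (b :: rest)

lemma chainSum_nonneg (d : PseudoMetricOn X) (γ : I → X) : ∀ l : List I, 0 ≤ chainSum d γ l
  | [] => le_refl 0
  | [_] => le_refl 0
  | a :: b :: rest => by
      rw [chainSum]
      exact add_nonneg (d.nonneg _ _) (chainSum_nonneg d γ (b :: rest))

lemma dist_head_getLast (d : PseudoMetricOn X) (γ : I → X) :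
    ∀ (l : List I) (a b : I), l.head? = some a → l.getLast? = some b →
      d.d (γ a) (γ b) ≤ chainSum d γ l
  | [], a, b => by simp
  | [x], a, b => by
      intro ha hb
      simp at ha hb
      subst ha; subst hb
      rw [chainSum, d.refl]
  | x :: y :: rest, a, b => by
      intro ha hb
      obtain rfl : x = a := by simpa using ha
      have hb' : (y :: rest).getLast? = some b := by
        rwa [List.getLast?_cons_cons] at hb
      calc d.d (γ x) (γ b) ≤ d.d (γ x) (γ y) + d.d (γ y) (γ b) := d.triangle _ _ _
        _ ≤ d.d (γ x) (γ y) + chainSum d γ (y :: rest) := by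
            have := dist_head_getLast d γ (y :: rest) y b rfl hb'
            linarith
        _ = chainSum d γ (x :: y :: rest) := by rw [chainSum]

lemma chainSum_le_of_chain' (d1 d2 : PseudoMetricOn X) (γ : I → X) (C : ℝ) :
    ∀ l : List I, l.Chain' (fun u v => d1.d (γ u) (γ v) ≤ C * d2.d (γ u) (γ v)) →
      chainSum d1 γ l ≤ C * chainSum d2 γ l
  | [] => by intro _; simp [chainSum]
  | [_] => by intro _; simp [chainSum]
  | a :: b :: rest => by
      intro h
      simp only [List.Chain', List.isChain_cons_cons] at h
      have ih := chainSum_le_of_chain' d1 d2 γ C (b :: rest) h.2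
      rw [chainSum, chainSum, mul_add]
      exact add_le_add h.1 ih

lemma chainSum_append (d : PseudoMetricOn X) (γ : I → X) (m : I) (t₂ : List I) :
    ∀ l₁ : List I, l₁.getLast? = some m →
      chainSum d γ (l₁ ++ t₂) = chainSum d γ l₁ + chainSum d γ (m :: t₂)
  | [] => by simp
  | [x] => by
      intro hx
      simp at hx
      subst hx
      rw [chainSum]
      simp
  | x :: y :: rest => by
      intro hx
      rw [List.getLast?_cons_cons] at hx
      have ih := chainSum_append d γ m t₂ (y :: rest) hx
      simp only [List.cons_append] at *
      rw [chainSum, chainSum]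
      rw [ih]
      ring

lemma sorted_le_of_getLast? : ∀ (l : List I), l.Pairwise (· ≤ ·) → ∀ m : I, l.getLast? = some m →
      ∀ x ∈ l, x ≤ m
  | [] => by simp
  | a :: t => by
      intro hs m hm x hx
      rcases eq_or_ne t [] with rfl | ht
      · simp at hm hx
        subst hm; subst hx; exact le_refl _
      · have hm' : t.getLast? = some m := by
          obtain ⟨z, tz, rfl⟩ := List.exists_cons_of_ne_nil ht
          rwa [List.getLast?_cons_cons] at hm
        rcases List.mem_cons.1 hx with rfl | hxt
        · have hmm : m ∈ t := List.mem_of_getLast? hm'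
          exact (List.pairwise_cons.1 hs).1 m hmm
        · exact sorted_le_of_getLast? t (List.pairwise_cons.1 hs).2 m hm' x hxt



variable {X : Type*}

lemma glue (γ : I → X) (R : I → I → Prop) {l₁ l₂ : List I} {m : I}
    (h₁ : l₁ ≠ []) (s₁ : l₁.Pairwise (· ≤ ·)) (hl₁ : l₁.getLast? = some m) (c₁ : l₁.Chain' R)
    (s₂ : l₂.Pairwise (· ≤ ·)) (hh₂ : l₂.head? = some m) (c₂ : l₂.Chain' R) :
    (l₁ ++ l₂.tail) ≠ [] ∧ (l₁ ++ l₂.tail).Pairwise (· ≤ ·) ∧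
    (l₁ ++ l₂.tail).head? = l₁.head? ∧ (l₁ ++ l₂.tail).getLast? = l₂.getLast? ∧
    (l₁ ++ l₂.tail).Chain' R ∧
    ∀ d : PseudoMetricOn X, chainSum d γ (l₁ ++ l₂.tail) = chainSum d γ l₁ + chainSum d γ l₂ := by
  obtain ⟨x, t₂, rfl⟩ := List.exists_cons_of_ne_nil
    (show l₂ ≠ [] by rintro rfl; simp at hh₂)
  obtain rfl : x = m := by simpa using hh₂
  have hcross : ∀ p ∈ l₁, ∀ q ∈ t₂, p ≤ q := fun p hp q hq =>
    le_trans (sorted_le_of_getLast? l₁ s₁ x hl₁ p hp) ((List.pairwise_cons.1 s₂).1 q hq)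
  refine ⟨by simp [h₁], ?_, ?_, ?_, ?_, fun d => chainSum_append d γ x t₂ l₁ hl₁⟩
  · exact List.pairwise_append.2 ⟨s₁, (List.pairwise_cons.1 s₂).2, hcross⟩
  · obtain ⟨y, t₁, rfl⟩ := List.exists_cons_of_ne_nil h₁
    rfl
  · show (l₁ ++ t₂).getLast? = ((x :: t₂) : List I).getLast?
    rcases eq_or_ne t₂ [] with rfl | ht₂
    · simpa using hl₁
    · obtain ⟨z, tz, rfl⟩ := List.exists_cons_of_ne_nil ht₂
      rw [List.getLast?_cons_cons, List.getLast?_append]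
      cases h : (z :: tz : List I).getLast? with
      | none => simp at h
      | some w => rfl
  · refine List.IsChain.append c₁ (List.isChain_cons.1 c₂).2 ?_
    intro p hp q hq
    rw [hl₁] at hp
    obtain rfl : p = x := by simpa using hp.symm
    exact (List.isChain_cons.1 c₂).1 q hq

lemma chain_interval (d1 d2 : PseudoMetricOn X) (C : ℝ) (γ : I → X)
    (hdisc : ∀ x : X, ∃ ε > (0:ℝ), ∀ y : X, d1.d x y < ε → d1.d x y ≤ C * d2.d x y)
    (hcont : ∀ (t : I) (ε : ℝ), 0 < ε → ∃ δ > (0:ℝ), ∀ s : I,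
      |(s:ℝ) - (t:ℝ)| < δ → d1.d (γ s) (γ t) < ε)
    (a b : I) (hab : a ≤ b) :
    ∃ l : List I, l ≠ [] ∧ l.Pairwise (· ≤ ·) ∧ l.head? = some a ∧ l.getLast? = some b ∧
      l.Chain' (fun u v => d1.d (γ u) (γ v) ≤ C * d2.d (γ u) (γ v)) := by
  set R : I → I → Prop := fun u v => d1.d (γ u) (γ v) ≤ C * d2.d (γ u) (γ v) with hR
  set Good : I → Prop := fun t => ∃ l : List I, l ≠ [] ∧ l.Pairwise (· ≤ ·) ∧
    l.head? = some a ∧ l.getLast? = some t ∧ l.Chain' R with hGood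
  have ext : ∀ t v : I, Good t → t ≤ v → R t v → Good v := by
    intro t v ⟨l, hne, hs, hh, hl, hc⟩ htv hR'
    have hsorted2 : ([t, v] : List I).Pairwise (· ≤ ·) := by simp [htv]
    have := glue γ R hne hs hl hc hsorted2 (by simp) (by simp [List.Chain', hR'])
    simp only [List.tail_cons] at this
    exact ⟨l ++ [v], this.1, this.2.1, by rw [this.2.2.1, hh], by rw [this.2.2.2.1]; simp,
      this.2.2.2.2.1⟩
  have hGa : Good a := ⟨[a], by simp, by simp, rfl, rfl, by simp [List.Chain']⟩
  set T : Set ℝ := {r | ∃ t : I, Good t ∧ a ≤ t ∧ t ≤ b ∧ (t : ℝ) = r} with hT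
  have hTa : (a : ℝ) ∈ T := ⟨a, hGa, le_refl _, hab, rfl⟩
  have hTne : T.Nonempty := ⟨_, hTa⟩
  have hbdd : BddAbove T := ⟨(b : ℝ), by rintro r ⟨t, _, _, htb, rfl⟩; exact htb⟩
  set ur : ℝ := sSup T with hur
  have hau : (a : ℝ) ≤ ur := le_csSup hbdd hTa
  have hub : ur ≤ (b : ℝ) := csSup_le hTne (by rintro r ⟨t, _, _, htb, rfl⟩; exact htb)
  set u : I := ⟨ur, le_trans a.2.1 hau, le_trans hub b.2.2⟩ with hu
  obtain ⟨ε, hε, hεP⟩ := hdisc (γ u)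
  obtain ⟨δ, hδ, hδP⟩ := hcont u ε hε
  have hRu : ∀ s : I, |(s:ℝ) - ur| < δ → R s u ∧ R u s := by
    intro s hs
    have h1 : d1.d (γ s) (γ u) < ε := hδP s hs
    have h2 : d1.d (γ u) (γ s) < ε := by rwa [d1.symm]
    have h3 := hεP (γ s) h2
    constructor
    · show d1.d (γ s) (γ u) ≤ C * d2.d (γ s) (γ u)
      rw [d1.symm, d2.symm]; exact h3
    · exact h3
  have hGu : Good u := by
    obtain ⟨r, ⟨t, hGt, hat, htb, rfl⟩, hrt⟩ := exists_lt_of_lt_csSup hTne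
      (show ur - δ < ur by linarith)
    have htu : (t : ℝ) ≤ ur := le_csSup hbdd ⟨t, hGt, hat, htb, rfl⟩
    have habs : |(t:ℝ) - ur| < δ := by rw [abs_sub_lt_iff]; constructor <;> linarith
    exact ext t u hGt htu ((hRu t habs).1)
  have hub' : ur = (b : ℝ) := by
    by_contra hne
    have hlt : ur < (b : ℝ) := lt_of_le_of_ne hub hne
    set sr : ℝ := min (b : ℝ) (ur + δ / 2) with hsr
    have hs1 : ur < sr := lt_min hlt (by linarith)
    have hs2 : sr ≤ (b : ℝ) := min_le_left _ _
    set s : I := ⟨sr, le_trans u.2.1 hs1.le, le_trans hs2 b.2.2⟩ with hs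
    have habs : |(s:ℝ) - ur| < δ := by
      rw [abs_sub_lt_iff]
      constructor
      · have : sr ≤ ur + δ / 2 := min_le_right _ _
        simp only [hs]; linarith
      · simp only [hs]; linarith
    have hGs : Good s := ext u s hGu (by exact_mod_cast hs1.le) (hRu s habs).2
    have : sr ∈ T := ⟨s, hGs, by exact_mod_cast le_trans hau hs1.le, by exact_mod_cast hs2, rfl⟩
    have := le_csSup hbdd this
    linarith
  have hub2 : u = b := Subtype.ext hub'
  rw [hub2] at hGu
  exact hGu



variable {X : Type*}

lemma chainSum_eq_sum (d : PseudoMetricOn X) (γ : I → X) :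
    ∀ (tl : List I) (a : I), chainSum d γ (a :: tl) =
      ∑ i : Fin tl.length, d.d (γ ((a :: tl).get i.castSucc)) (γ ((a :: tl).get i.succ))
  | [], a => by simp [chainSum]
  | b :: t, a => by
    rw [chainSum]
    simp only [List.length_cons]
    rw [Fin.sum_univ_succ, chainSum_eq_sum d γ t b]
    congr 1

lemma listPartition (l : List I) (hne : l ≠ []) (hs : l.Pairwise (· ≤ ·))
    (hh : l.head? = some 0) (hl : l.getLast? = some 1) :
    ∃ Q : UnitIntervalPartition, ∀ d : PseudoMetricOn X, ∀ γ : I → X,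
      pathSum d γ Q = chainSum d γ l := by
  obtain ⟨a, tl, rfl⟩ := List.exists_cons_of_ne_nil hne
  obtain rfl : a = 0 := by simpa using hh
  refine ⟨⟨tl.length, (0 :: tl : List I).get, (List.Pairwise.sortedLE hs).monotone_get, rfl, ?_⟩,
    fun d γ => ?_⟩
  · have h1 : ((0 : I) :: tl).getLast (List.cons_ne_nil _ _) = 1 := by
      have := List.getLast_mem_getLast? (l := (0 : I) :: tl) (List.cons_ne_nil _ _)
      rw [hl] at this
      exact (by simpa using this : (1 : I) = _).symm
    rw [← h1, List.getLast_eq_getElem]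
    rfl
  · rw [pathSum, chainSum_eq_sum]


lemma exists_refinement {X : Type*} (d1 d2 : PseudoMetricOn X) (C : ℝ) (γ : I → X)
    (hdisc : ∀ x : X, ∃ ε > (0:ℝ), ∀ y : X, d1.d x y < ε → d1.d x y ≤ C * d2.d x y)
    (hcont : ∀ (t : I) (ε : ℝ), 0 < ε → ∃ δ > (0:ℝ), ∀ s : I,
      |(s:ℝ) - (t:ℝ)| < δ → d1.d (γ s) (γ t) < ε)
    (P : UnitIntervalPartition) :
    ∃ Q : UnitIntervalPartition, pathSum d1 γ P ≤ C * pathSum d2 γ Q := by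
  set u : ℕ → I := fun i => P.t ⟨min i P.n, Nat.lt_succ_of_le (min_le_right _ _)⟩ with hu
  have humono : Monotone u := fun i j hij => P.mono (by
    rw [Fin.mk_le_mk]; omega)
  have key : ∀ k, k ≤ P.n → ∃ l : List I, l ≠ [] ∧ l.Pairwise (· ≤ ·) ∧
      l.head? = some (u 0) ∧ l.getLast? = some (u k) ∧
      l.Chain' (fun p q => d1.d (γ p) (γ q) ≤ C * d2.d (γ p) (γ q)) ∧
      ∑ i ∈ Finset.range k, d1.d (γ (u i)) (γ (u (i+1))) ≤ C * chainSum d2 γ l := by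
    intro k
    induction k with
    | zero =>
      intro _
      refine ⟨[u 0], by simp, by simp, rfl, rfl, by simp [List.Chain'], ?_⟩
      simp [chainSum]
    | succ k ih =>
      intro hk
      obtain ⟨l, hne, hs, hh, hlast, hch, hsum⟩ := ih (le_of_lt hk)
      obtain ⟨l₂, hne₂, hs₂, hh₂, hlast₂, hch₂⟩ :=
        chain_interval d1 d2 C γ hdisc hcont (u k) (u (k+1)) (humono (Nat.le_succ k))
      have hglue := glue γ _ hne hs hlast hch hs₂ hh₂ hch₂
      refine ⟨l ++ l₂.tail, hglue.1, hglue.2.1, by rw [hglue.2.2.1, hh],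
        by rw [hglue.2.2.2.1, hlast₂], hglue.2.2.2.2.1, ?_⟩
      rw [Finset.sum_range_succ, hglue.2.2.2.2.2 d2, mul_add]
      have h1 : d1.d (γ (u k)) (γ (u (k+1))) ≤ chainSum d1 γ l₂ :=
        dist_head_getLast d1 γ l₂ _ _ hh₂ hlast₂
      have h2 : chainSum d1 γ l₂ ≤ C * chainSum d2 γ l₂ :=
        chainSum_le_of_chain' d1 d2 γ C l₂ hch₂
      exact add_le_add hsum (le_trans h1 h2)
  obtain ⟨l, hne, hs, hh, hlast, hch, hsum⟩ := key P.n le_rfl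
  have hu0 : u 0 = P.t 0 := by
    simp only [hu]; congr 1
  have hun : u P.n = P.t (Fin.last P.n) := by
    simp only [hu]; congr 1; exact Fin.ext (by simp [Fin.last])
  obtain ⟨Q, hQ⟩ := listPartition l hne hs (by rw [hh, hu0, P.first])
    (by rw [hlast, hun, P.last])
  refine ⟨Q, ?_⟩
  rw [hQ d2 γ]
  refine le_trans (le_of_eq ?_) hsum
  rw [pathSum, ← Fin.sum_univ_eq_sum_range (fun i => d1.d (γ (u i)) (γ (u (i+1)))) P.n]
  refine Finset.sum_congr rfl fun i _ => ?_
  have e1 : u (i : ℕ) = P.t i.castSucc := by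
    simp only [hu]; congr 1; exact Fin.ext (by simp [min_eq_left (le_of_lt i.isLt)])
  have e2 : u ((i : ℕ) + 1) = P.t i.succ := by
    simp only [hu]; congr 1; exact Fin.ext (by simp [min_eq_left (Nat.succ_le_of_lt i.isLt)])
  rw [e1, e2]

end IntrinsicAux

open IntrinsicAux

/-- global stability `d2 ≤ c·d1` together with local discriminativity
(anchored at each point) imply that the induced intrinsic pseudometrics, with admissible
paths the `d1`-continuous ones, are globally equivalent:
`(1/C)·d̂1 ≤ d̂2 ≤ c·d̂1` in `[0,∞]`. -/
theorem intrinsicDist_globally_equivalent {X : Type*} (d1 d2 : PseudoMetricOn X) (c C : ℝ)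
    (hc : 0 < c) (hC : 0 < C)
    (hstab : ∀ x y, d2.d x y ≤ c * d1.d x y)
    (hdisc : ∀ x : X, ∃ ε > (0 : ℝ), ∀ y : X, d1.d x y < ε → d1.d x y ≤ C * d2.d x y)
    (x y : X) :
    ENNReal.ofReal (1 / C) * intrinsicDist d1 d1 x y ≤ intrinsicDist d2 d1 x y ∧
      intrinsicDist d2 d1 x y ≤ ENNReal.ofReal c * intrinsicDist d1 d1 x y := by
  classical
  letI : PseudoMetricSpace X :=
    { dist := d1.d, dist_self := d1.refl, dist_comm := d1.symm, dist_triangle := d1.triangle }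
  have hadm : ∀ γ : I → X, IsAdmissible d1 γ →
      ∀ (t : I) (ε : ℝ), 0 < ε → ∃ δ > (0:ℝ), ∀ s : I,
        |(s:ℝ) - (t:ℝ)| < δ → d1.d (γ s) (γ t) < ε := by
    intro γ hγ t ε hε
    have hcont : Continuous γ := hγ
    obtain ⟨δ, hδ, h⟩ := Metric.continuous_iff.1 hcont t ε hε
    exact ⟨δ, hδ, fun s hs => h s (by rw [Subtype.dist_eq, Real.dist_eq]; exact hs)⟩
  have hcore : ∀ γ : I → X, IsAdmissible d1 γ →
      pathLength d1 γ ≤ ENNReal.ofReal C * pathLength d2 γ := by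
    intro γ hγ
    rw [pathLength]
    apply iSup_le
    intro P
    obtain ⟨Q, hQ⟩ := exists_refinement d1 d2 C γ hdisc (hadm γ hγ) P
    calc ENNReal.ofReal (pathSum d1 γ P)
        ≤ ENNReal.ofReal (C * pathSum d2 γ Q) := ENNReal.ofReal_le_ofReal hQ
      _ = ENNReal.ofReal C * ENNReal.ofReal (pathSum d2 γ Q) := ENNReal.ofReal_mul hC.le
      _ ≤ ENNReal.ofReal C * pathLength d2 γ := by
          rw [pathLength]
          exact mul_le_mul_right (le_iSup (fun Q => ENNReal.ofReal (pathSum d2 γ Q)) Q) _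
  have heasy : ∀ γ : I → X, pathLength d2 γ ≤ ENNReal.ofReal c * pathLength d1 γ := by
    intro γ
    rw [pathLength]
    apply iSup_le
    intro P
    have h1 : pathSum d2 γ P ≤ c * pathSum d1 γ P := by
      rw [pathSum, pathSum, Finset.mul_sum]
      exact Finset.sum_le_sum fun i _ => hstab _ _
    calc ENNReal.ofReal (pathSum d2 γ P)
        ≤ ENNReal.ofReal (c * pathSum d1 γ P) := ENNReal.ofReal_le_ofReal h1
      _ = ENNReal.ofReal c * ENNReal.ofReal (pathSum d1 γ P) := ENNReal.ofReal_mul hc.le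
      _ ≤ ENNReal.ofReal c * pathLength d1 γ := by
          rw [pathLength]
          exact mul_le_mul_right (le_iSup (fun P => ENNReal.ofReal (pathSum d1 γ P)) P) _
  constructor
  · rw [show intrinsicDist d2 d1 x y =
        ⨅ (γ : I → X) (_ : IsAdmissible d1 γ ∧ γ 0 = x ∧ γ 1 = y), pathLength d2 γ from rfl]
    apply le_iInf; intro γ; apply le_iInf; intro hγ
    have hle : intrinsicDist d1 d1 x y ≤ pathLength d1 γ := by
      rw [intrinsicDist]; exact iInf₂_le γ hγ
    calc ENNReal.ofReal (1/C) * intrinsicDist d1 d1 x y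
        ≤ ENNReal.ofReal (1/C) * pathLength d1 γ := mul_le_mul_right hle _
      _ ≤ ENNReal.ofReal (1/C) * (ENNReal.ofReal C * pathLength d2 γ) :=
          mul_le_mul_right (hcore γ hγ.1) _
      _ = ENNReal.ofReal ((1/C) * C) * pathLength d2 γ := by
          rw [ENNReal.ofReal_mul (by positivity), mul_assoc]
      _ = pathLength d2 γ := by
          rw [one_div_mul_cancel (ne_of_gt hC)]; simp
  · have h0 : ENNReal.ofReal c ≠ 0 := (ENNReal.ofReal_pos.2 hc).ne'
    have ht : ENNReal.ofReal c ≠ ⊤ := ENNReal.ofReal_ne_top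
    calc intrinsicDist d2 d1 x y
        ≤ ⨅ (γ : I → X) (_ : IsAdmissible d1 γ ∧ γ 0 = x ∧ γ 1 = y),
            ENNReal.ofReal c * pathLength d1 γ := by
          rw [intrinsicDist]
          exact iInf_mono fun γ => iInf_mono fun hγ => heasy γ
      _ = ENNReal.ofReal c * intrinsicDist d1 d1 x y := by
          rw [intrinsicDist, ENNReal.mul_iInf_of_ne h0 ht]
          exact iInf_congr fun γ => (ENNReal.mul_iInf_of_ne h0 ht).symm
end
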